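/- arXiv:1707.04040 — 5 statements merged into one kernel-verified Lean document; each statement's English description precedes it below -/
import Mathlib

section
/- Let Ψ: ℤ → ℂ² be defined by Ψ(x) = (∏_{y=1}^{x} D⁺_y) Ψ(0) for x ≥ 1 (product applied in order D⁺_x ⋯ D⁺_1), Ψ(0) given, and Ψ(x) = (∏_{y=-1}^{x} D⁻_y) Ψ(0) for x ≤ −1 (product D⁻_x ⋯ D⁻_{-1}), where D⁻_x = (D⁺_{x+1})^{-1}. Then Ψ satisfies the eigenvalue equation λΨ^L(x) = a_{x+1}Ψ^L(x+1) + b_{x+1}Ψ^R(x+1) and λΨ^R(x) = c_{x-1}Ψ^L(x-1) + d_{x-1}Ψ^R(x-1) for all x ∈ ℤ. -/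
open Matrix

/-! The second row of `D⁺_x` is the second eigenvalue equation at `x`, and `a_x` times the first
row plus `b_x` times the second is the first eigenvalue equation at `x - 1`. So it suffices that
`Ψ(x) = D⁺_x Ψ(x - 1)` for every `x`; for `x ≤ 0` this is the backward recursion multiplied by
`D⁺_x`, which is invertible because `det D⁺_x = d_{x-1} / a_x ≠ 0`. -/

/-- `D⁺_x`, with `a b` the coefficients at site `x` and `c d` those at site `x - 1`. -/
def transferMatrix {K : Type*} [Field K] (lam a b c d : K) : Matrix (Fin 2) (Fin 2) K :=
  !![(lam ^ 2 - b * c) / (lam * a), -(b * d) / (lam * a); c / lam, d / lam]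

section TransferMatrix

variable {K : Type*} [Field K] {lam a b c d : K}

theorem transferMatrix_det (hlam : lam ≠ 0) : (transferMatrix lam a b c d).det = d / a := by
  rw [transferMatrix, det_fin_two_of]
  by_cases ha : a = 0
  · simp [ha]
  · field_simp
    ring

theorem lam_mul_transferMatrix_mulVec_one (hlam : lam ≠ 0) (v : Fin 2 → K) :
    lam * (transferMatrix lam a b c d *ᵥ v) 1 = c * v 0 + d * v 1 := by
  simp only [transferMatrix, mulVec, vec2_dotProduct, of_apply, cons_val_zero, cons_val_one]
  field_simp

theorem mulVec_transferMatrix_eq_lam_mul (hlam : lam ≠ 0) (ha : a ≠ 0) (v : Fin 2 → K) :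
    a * (transferMatrix lam a b c d *ᵥ v) 0 + b * (transferMatrix lam a b c d *ᵥ v) 1 =
      lam * v 0 := by
  simp only [transferMatrix, mulVec, vec2_dotProduct, of_apply, cons_val_zero, cons_val_one]
  field_simp
  ring

end TransferMatrix

theorem mulVec_pred_of_forward_backward {n K : Type*} [Fintype n] [DecidableEq n] [Field K]
    {M : ℤ → Matrix n n K} (hM : ∀ x, IsUnit (M x).det) {Ψ : ℤ → n → K}
    (hpos : ∀ x : ℤ, 1 ≤ x → Ψ x = M x *ᵥ Ψ (x - 1))
    (hneg : ∀ x : ℤ, x ≤ -1 → Ψ x = (M (x + 1))⁻¹ *ᵥ Ψ (x + 1)) (x : ℤ) :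
    Ψ x = M x *ᵥ Ψ (x - 1) := by
  rcases le_or_gt 1 x with hx | hx
  · exact hpos x hx
  · have hback := hneg (x - 1) (by omega)
    rw [sub_add_cancel] at hback
    rw [hback, mulVec_mulVec, mul_nonsing_inv _ (hM x), one_mulVec]

theorem product_state_is_eigenvector_general
    (a b c d : ℤ → ℂ)
    (habcd : ∀ x : ℤ, a x * b x * c x * d x ≠ 0)
    (lam : ℂ) (hlam : ‖lam‖ = 1)
    (Dplus : ℤ → Matrix (Fin 2) (Fin 2) ℂ)
    (hD : ∀ x : ℤ, Dplus x =
      !![(lam ^ 2 - b x * c (x - 1)) / (lam * a x), -(b x * d (x - 1)) / (lam * a x);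
         c (x - 1) / lam, d (x - 1) / lam])
    (Ψ : ℤ → Fin 2 → ℂ)
    (hpos : ∀ x : ℤ, 1 ≤ x → Ψ x = (Dplus x).mulVec (Ψ (x - 1)))
    (hneg : ∀ x : ℤ, x ≤ -1 → Ψ x = (Dplus (x + 1))⁻¹.mulVec (Ψ (x + 1))) :
    ∀ x : ℤ,
      lam * Ψ x 0 = a (x + 1) * Ψ (x + 1) 0 + b (x + 1) * Ψ (x + 1) 1 ∧
      lam * Ψ x 1 = c (x - 1) * Ψ (x - 1) 0 + d (x - 1) * Ψ (x - 1) 1 := by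
  have hlam0 : lam ≠ 0 := norm_ne_zero_iff.mp (by simp [hlam])
  have ha (x : ℤ) : a x ≠ 0 := fun h ↦ habcd x (by simp [h])
  have hd (x : ℤ) : d x ≠ 0 := fun h ↦ habcd x (by simp [h])
  have hT (x : ℤ) : Dplus x = transferMatrix lam (a x) (b x) (c (x - 1)) (d (x - 1)) := hD x
  have hstep := mulVec_pred_of_forward_backward
    (fun x ↦ by rw [hT, transferMatrix_det hlam0]; exact (div_ne_zero (hd _) (ha x)).isUnit)
    hpos hneg
  intro x
  constructor
  · rw [hstep (x + 1), hT, add_sub_cancel_right, mulVec_transferMatrix_eq_lam_mul hlam0 (ha _)]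
  · rw [hstep x, hT, lam_mul_transferMatrix_mulVec_one hlam0]

/-- the state built from products of transfer matrices (equivalently,
Ψ(x) = D⁺_x Ψ(x-1) for x ≥ 1 and Ψ(x) = (D⁺_{x+1})⁻¹ Ψ(x+1) for x ≤ -1)
solves the eigenvalue problem U⁽ˢ⁾Ψ = λΨ. -/
theorem product_state_is_eigenvector
    (a b c d : ℤ → ℂ)
    (hU : ∀ x : ℤ, !![a x, b x; c x, d x] ∈ Matrix.unitaryGroup (Fin 2) ℂ)
    (habcd : ∀ x : ℤ, a x * b x * c x * d x ≠ 0)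
    (lam : ℂ) (hlam : ‖lam‖ = 1)
    (Dplus : ℤ → Matrix (Fin 2) (Fin 2) ℂ)
    (hD : ∀ x : ℤ, Dplus x =
      !![(lam ^ 2 - b x * c (x - 1)) / (lam * a x), -(b x * d (x - 1)) / (lam * a x);
         c (x - 1) / lam, d (x - 1) / lam])
    (Ψ : ℤ → Fin 2 → ℂ)
    (hpos : ∀ x : ℤ, 1 ≤ x → Ψ x = (Dplus x).mulVec (Ψ (x - 1)))
    (hneg : ∀ x : ℤ, x ≤ -1 → Ψ x = (Dplus (x + 1))⁻¹.mulVec (Ψ (x + 1))) :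
    ∀ x : ℤ,
      lam * Ψ x 0 = a (x + 1) * Ψ (x + 1) 0 + b (x + 1) * Ψ (x + 1) 1 ∧
      lam * Ψ x 1 = c (x - 1) * Ψ (x - 1) 0 + d (x - 1) * Ψ (x - 1) 1 :=
  product_state_is_eigenvector_general a b c d habcd lam hlam Dplus hD Ψ hpos hneg
end

section
/- Let U = [[a,b],[c,d]] be unitary with abcd ≠ 0, λ ∈ ℂ with |λ|=1 and (λ² + Δ)² = 4λ²ad where Δ = ad − bc, and let ∇ = ad + bc. Define Ψ: ℤ → ℂ² by Ψ(x) = ((λ²+Δ)/(2aλ))^x · (1/(λ²+Δ)) · (α(1+x)λ² − (α∇ + 2bdβ)x + αΔ, β(1−x)λ² + (β∇ + 2acα)x + βΔ) for x ≥ 0, and Ψ(x) = ((λ²+Δ)/(2dλ))^{−x} · (1/(λ²+Δ)) · (α(1+x)λ² − (α∇ + 2bdβ)x + αΔ, β(1−x)λ² + (β∇ + 2acα)x + βΔ) for x ≤ 0 (assuming λ²+Δ ≠ 0). Then Ψ satisfies the eigenvalue equation λΨ^L(x) = aΨ^L(x+1)+bΨ^R(x+1), λΨ^R(x) = cΨ^L(x−1)+dΨ^R(x−1)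 for all x ∈ ℤ. -/
/-!
Write `S = λ² + Δ`. On each half-line both components are a geometric sequence times a
polynomial of degree one in `x`: with ratio `μ = S/(2aλ)` rightwards from `0`, and with
ratio `ν = S/(2dλ)` leftwards from `0`. Cancelling the geometric factor turns each half of
the eigenvalue equation into an identity between these polynomials, which holds modulo the
double-root condition `S² = 4λ²ad`. That condition together with `S ≠ 0` also forces
`a`, `d`, `λ ≠ 0`, so `μ` and `ν` are invertible.
-/

namespace QuadraticState

section Geometric

variable {r lam A B C p q q' : ℂ} {k k' : ℤ}

lemma eigen_step_of_zpow_succ (hr : r ≠ 0) (hk : k' = k + 1)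
    (h : lam * p = r * (A * q + B * q')) :
    lam * (r ^ k * C * p) = A * (r ^ k' * C * q) + B * (r ^ k' * C * q') := by
  rw [hk, zpow_add_one₀ hr]
  linear_combination r ^ k * C * h

lemma eigen_step_of_zpow_pred (hr : r ≠ 0) (hk : k = k' + 1)
    (h : r * (lam * p) = A * q + B * q') :
    lam * (r ^ k * C * p) = A * (r ^ k' * C * q) + B * (r ^ k' * C * q') := by
  rw [hk, zpow_add_one₀ hr]
  linear_combination r ^ k' * C * h

end Geometric

section Polynomial

variable (a b c d lam α β : ℂ)

def polyL (x : ℤ) : ℂ :=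
  α * (1 + (x : ℂ)) * lam ^ 2 - (α * (a * d + b * c) + 2 * b * d * β) * (x : ℂ)
    + α * (a * d - b * c)

def polyR (x : ℤ) : ℂ :=
  β * (1 - (x : ℂ)) * lam ^ 2 + (β * (a * d + b * c) + 2 * a * c * α) * (x : ℂ)
    + β * (a * d - b * c)

variable {a b c d lam}
variable (hmult : (lam ^ 2 + (a * d - b * c)) ^ 2 = 4 * lam ^ 2 * (a * d))
include hmult

lemma lam_mul_polyL_of_nonneg_side (ha : a ≠ 0) (hlam : lam ≠ 0) (x : ℤ) :
    lam * polyL a b c d lam α β x = (lam ^ 2 + (a * d - b * c)) / (2 * a * lam) *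
      (a * polyL a b c d lam α β (x + 1) + b * polyR a b c d lam α β (x + 1)) := by
  rw [div_mul_eq_mul_div, eq_div_iff (by simp [ha, hlam])]
  simp only [polyL, polyR]
  push_cast
  linear_combination (x : ℂ) * (a * α + b * β) * hmult

lemma lam_mul_polyR_of_nonneg_side (ha : a ≠ 0) (hlam : lam ≠ 0) (x : ℤ) :
    (lam ^ 2 + (a * d - b * c)) / (2 * a * lam) * (lam * polyR a b c d lam α β x) =
      c * polyL a b c d lam α β (x - 1) + d * polyR a b c d lam α β (x - 1) := by
  rw [div_mul_eq_mul_div, div_eq_iff (by simp [ha, hlam])]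
  simp only [polyL, polyR]
  push_cast
  linear_combination lam * β * (1 - (x : ℂ)) * hmult

lemma lam_mul_polyL_of_nonpos_side (hd : d ≠ 0) (hlam : lam ≠ 0) (x : ℤ) :
    (lam ^ 2 + (a * d - b * c)) / (2 * d * lam) * (lam * polyL a b c d lam α β x) =
      a * polyL a b c d lam α β (x + 1) + b * polyR a b c d lam α β (x + 1) := by
  rw [div_mul_eq_mul_div, div_eq_iff (by simp [hd, hlam])]
  simp only [polyL, polyR]
  push_cast
  linear_combination lam * α * (1 + (x : ℂ)) * hmult

lemma lam_mul_polyR_of_nonpos_side (hd : d ≠ 0) (hlam : lam ≠ 0) (x : ℤ) :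
    lam * polyR a b c d lam α β x = (lam ^ 2 + (a * d - b * c)) / (2 * d * lam) *
      (c * polyL a b c d lam α β (x - 1) + d * polyR a b c d lam α β (x - 1)) := by
  rw [div_mul_eq_mul_div, eq_div_iff (by simp [hd, hlam])]
  simp only [polyL, polyR]
  push_cast
  linear_combination -(x : ℂ) * (c * α + d * β) * hmult

end Polynomial

end QuadraticState

theorem quadratic_state_is_eigenvector_general
    (a b c d : ℂ)
    (lam : ℂ)
    (hmult : (lam ^ 2 + (a * d - b * c)) ^ 2 = 4 * lam ^ 2 * (a * d))
    (hne : lam ^ 2 + (a * d - b * c) ≠ 0)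
    (α β : ℂ) (ΨL ΨR : ℤ → ℂ)
    (hpos : ∀ x : ℤ, 0 ≤ x →
      ΨL x = ((lam ^ 2 + (a * d - b * c)) / (2 * a * lam)) ^ x *
        (1 / (lam ^ 2 + (a * d - b * c))) *
        (α * (1 + (x : ℂ)) * lam ^ 2 - (α * (a * d + b * c) + 2 * b * d * β) * (x : ℂ)
          + α * (a * d - b * c)) ∧
      ΨR x = ((lam ^ 2 + (a * d - b * c)) / (2 * a * lam)) ^ x *
        (1 / (lam ^ 2 + (a * d - b * c))) *
        (β * (1 - (x : ℂ)) * lam ^ 2 + (β * (a * d + b * c) + 2 * a * c * α) * (x : ℂ)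
          + β * (a * d - b * c)))
    (hneg : ∀ x : ℤ, x ≤ 0 →
      ΨL x = ((lam ^ 2 + (a * d - b * c)) / (2 * d * lam)) ^ (-x) *
        (1 / (lam ^ 2 + (a * d - b * c))) *
        (α * (1 + (x : ℂ)) * lam ^ 2 - (α * (a * d + b * c) + 2 * b * d * β) * (x : ℂ)
          + α * (a * d - b * c)) ∧
      ΨR x = ((lam ^ 2 + (a * d - b * c)) / (2 * d * lam)) ^ (-x) *
        (1 / (lam ^ 2 + (a * d - b * c))) *
        (β * (1 - (x : ℂ)) * lam ^ 2 + (β * (a * d + b * c) + 2 * a * c * α) * (x : ℂ)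
          + β * (a * d - b * c))) :
    ∀ x : ℤ,
      lam * ΨL x = a * ΨL (x + 1) + b * ΨR (x + 1) ∧
      lam * ΨR x = c * ΨL (x - 1) + d * ΨR (x - 1) := by
  have h4 : 4 * lam ^ 2 * (a * d) ≠ 0 := hmult ▸ pow_ne_zero 2 hne
  obtain ⟨hlam, ha, hd⟩ : lam ≠ 0 ∧ a ≠ 0 ∧ d ≠ 0 := by simpa using h4
  have hμ : (lam ^ 2 + (a * d - b * c)) / (2 * a * lam) ≠ 0 := by simp [hne, ha, hlam]
  have hν : (lam ^ 2 + (a * d - b * c)) / (2 * d * lam) ≠ 0 := by simp [hne, hd, hlam]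
  intro x
  constructor
  · rcases le_or_gt 0 x with hx | hx
    · rw [(hpos x hx).1, (hpos (x + 1) (by omega)).1, (hpos (x + 1) (by omega)).2]
      exact QuadraticState.eigen_step_of_zpow_succ hμ rfl
        (QuadraticState.lam_mul_polyL_of_nonneg_side α β hmult ha hlam x)
    · rw [(hneg x hx.le).1, (hneg (x + 1) (by omega)).1, (hneg (x + 1) (by omega)).2]
      exact QuadraticState.eigen_step_of_zpow_pred hν (by ring)
        (QuadraticState.lam_mul_polyL_of_nonpos_side α β hmult hd hlam x)
  · rcases le_or_gt 1 x with hx | hx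
    · rw [(hpos x (by omega)).2, (hpos (x - 1) (by omega)).1, (hpos (x - 1) (by omega)).2]
      exact QuadraticState.eigen_step_of_zpow_pred hμ (by ring)
        (QuadraticState.lam_mul_polyR_of_nonneg_side α β hmult ha hlam x)
    · rw [(hneg x (by omega)).2, (hneg (x - 1) (by omega)).1, (hneg (x - 1) (by omega)).2]
      exact QuadraticState.eigen_step_of_zpow_succ hν (by ring)
        (QuadraticState.lam_mul_polyR_of_nonpos_side α β hmult hd hlam x)

/-- the quadratic-polynomial-type state of Corollary 3.4(ii) solves the
eigenvalue problem for the space-homogeneous walk (multiple-root case). -/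
theorem quadratic_state_is_eigenvector
    (a b c d : ℂ)
    (hU : !![a, b; c, d] ∈ Matrix.unitaryGroup (Fin 2) ℂ)
    (habcd : a * b * c * d ≠ 0)
    (lam : ℂ) (hlam : ‖lam‖ = 1)
    (hmult : (lam ^ 2 + (a * d - b * c)) ^ 2 = 4 * lam ^ 2 * (a * d))
    (hne : lam ^ 2 + (a * d - b * c) ≠ 0)
    (α β : ℂ) (ΨL ΨR : ℤ → ℂ)
    (hpos : ∀ x : ℤ, 0 ≤ x →
      ΨL x = ((lam ^ 2 + (a * d - b * c)) / (2 * a * lam)) ^ x *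
        (1 / (lam ^ 2 + (a * d - b * c))) *
        (α * (1 + (x : ℂ)) * lam ^ 2 - (α * (a * d + b * c) + 2 * b * d * β) * (x : ℂ)
          + α * (a * d - b * c)) ∧
      ΨR x = ((lam ^ 2 + (a * d - b * c)) / (2 * a * lam)) ^ x *
        (1 / (lam ^ 2 + (a * d - b * c))) *
        (β * (1 - (x : ℂ)) * lam ^ 2 + (β * (a * d + b * c) + 2 * a * c * α) * (x : ℂ)
          + β * (a * d - b * c)))
    (hneg : ∀ x : ℤ, x ≤ 0 →
      ΨL x = ((lam ^ 2 + (a * d - b * c)) / (2 * d * lam)) ^ (-x) *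
        (1 / (lam ^ 2 + (a * d - b * c))) *
        (α * (1 + (x : ℂ)) * lam ^ 2 - (α * (a * d + b * c) + 2 * b * d * β) * (x : ℂ)
          + α * (a * d - b * c)) ∧
      ΨR x = ((lam ^ 2 + (a * d - b * c)) / (2 * d * lam)) ^ (-x) *
        (1 / (lam ^ 2 + (a * d - b * c))) *
        (β * (1 - (x : ℂ)) * lam ^ 2 + (β * (a * d + b * c) + 2 * a * c * α) * (x : ℂ)
          + β * (a * d - b * c))) :
    ∀ x : ℤ,
      lam * ΨL x = a * ΨL (x + 1) + b * ΨR (x + 1) ∧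
      lam * ΨR x = c * ΨL (x - 1) + d * ΨR (x - 1) :=
  quadratic_state_is_eigenvector_general a b c d lam hmult hne α β ΨL ΨR hpos hneg
end

section
/- For a 2×2 unitary matrix U = [[a,b],[c,d]] with abcd ≠ 0 and λ on the unit circle satisfying (λ²+Δ)² = 4λ²ad (Δ = ad−bc), the common ratio Λ = (λ²+Δ)/(2aλ) satisfies |Λ|² = |d/a|; hence in particular if |a| = |d| then |Λ| = 1 and the stationary measure μ(x) = ‖Ψ(x)‖² of Corollary 3.4(ii) grows quadratically: 0 < lim_{x→±∞} μ(x)/x² < ∞ whenever the leading coefficients αλ² − (α∇ + 2bdβ) and −βλ² + (β∇ + 2acα) are not both zero. -/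
open Matrix Complex Filter

/-- in the multiple-root case the common ratio has modulus one
(|Λ|² = |d/a|, hence |Λ| = 1 since |a| = |d| by unitarity), and the stationary
measure of Corollary 3.4(ii) grows quadratically at ±∞ when the leading
coefficients do not both vanish. -/
theorem multiple_root_quadratic_growth
    (a b c d : ℂ)
    (hU : !![a, b; c, d] ∈ Matrix.unitaryGroup (Fin 2) ℂ)
    (habcd : a * b * c * d ≠ 0)
    (lam : ℂ) (hlam : ‖lam‖ = 1)
    (hmult : (lam ^ 2 + (a * d - b * c)) ^ 2 = 4 * lam ^ 2 * (a * d))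
    (hne : lam ^ 2 + (a * d - b * c) ≠ 0)
    (α β : ℂ) (ΨL ΨR : ℤ → ℂ)
    (hpos : ∀ x : ℤ, 0 ≤ x →
      ΨL x = ((lam ^ 2 + (a * d - b * c)) / (2 * a * lam)) ^ x *
        (1 / (lam ^ 2 + (a * d - b * c))) *
        (α * (1 + (x : ℂ)) * lam ^ 2 - (α * (a * d + b * c) + 2 * b * d * β) * (x : ℂ)
          + α * (a * d - b * c)) ∧
      ΨR x = ((lam ^ 2 + (a * d - b * c)) / (2 * a * lam)) ^ x *
        (1 / (lam ^ 2 + (a * d - b * c))) *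
        (β * (1 - (x : ℂ)) * lam ^ 2 + (β * (a * d + b * c) + 2 * a * c * α) * (x : ℂ)
          + β * (a * d - b * c)))
    (hneg : ∀ x : ℤ, x ≤ 0 →
      ΨL x = ((lam ^ 2 + (a * d - b * c)) / (2 * d * lam)) ^ (-x) *
        (1 / (lam ^ 2 + (a * d - b * c))) *
        (α * (1 + (x : ℂ)) * lam ^ 2 - (α * (a * d + b * c) + 2 * b * d * β) * (x : ℂ)
          + α * (a * d - b * c)) ∧
      ΨR x = ((lam ^ 2 + (a * d - b * c)) / (2 * d * lam)) ^ (-x) *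
        (1 / (lam ^ 2 + (a * d - b * c))) *
        (β * (1 - (x : ℂ)) * lam ^ 2 + (β * (a * d + b * c) + 2 * a * c * α) * (x : ℂ)
          + β * (a * d - b * c)))
    (μ : ℤ → ℝ)
    (hμ : ∀ x : ℤ, μ x = ‖ΨL x‖ ^ 2 + ‖ΨR x‖ ^ 2) :
    ‖(lam ^ 2 + (a * d - b * c)) / (2 * a * lam)‖ ^ 2 = ‖d / a‖ ∧
    ‖(lam ^ 2 + (a * d - b * c)) / (2 * a * lam)‖ = 1 ∧
    (¬ (α * lam ^ 2 - (α * (a * d + b * c) + 2 * b * d * β) = 0 ∧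
        -(β * lam ^ 2) + (β * (a * d + b * c) + 2 * a * c * α) = 0) →
      (∃ Lp : ℝ, 0 < Lp ∧
        Tendsto (fun x : ℤ => μ x / (x : ℝ) ^ 2) atTop (nhds Lp)) ∧
      (∃ Lm : ℝ, 0 < Lm ∧
        Tendsto (fun x : ℤ => μ x / (x : ℝ) ^ 2) atBot (nhds Lm))) := by
  have ha : a ≠ 0 := by intro h; apply habcd; rw [h]; ring
  have hd : d ≠ 0 := by intro h; apply habcd; rw [h]; ring
  have hl0 : lam ≠ 0 := by intro h; rw [h] at hlam; simp at hlam
  -- |a| = |d| from unitarity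
  have had : ‖a‖ = ‖d‖ := by
    have h1 := (Matrix.mem_unitaryGroup_iff.mp hU)
    have h2 := (Matrix.mem_unitaryGroup_iff'.mp hU)
    have e1 := congrFun (congrFun h1 0) 0
    have e2 := congrFun (congrFun h2 1) 1
    simp [Matrix.mul_apply, Fin.sum_univ_two, Matrix.one_apply,
      Matrix.conjTranspose_apply] at e1 e2
    rw [Complex.mul_conj, Complex.mul_conj] at e1
    rw [mul_comm ((starRingEnd ℂ) b), mul_comm ((starRingEnd ℂ) d),
      Complex.mul_conj, Complex.mul_conj] at e2
    have n1 : Complex.normSq a + Complex.normSq b = 1 := by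
      exact_mod_cast congrArg Complex.re e1
    have n2 : Complex.normSq b + Complex.normSq d = 1 := by
      exact_mod_cast congrArg Complex.re e2
    have h : ‖a‖ ^ 2 = ‖d‖ ^ 2 := by
      rw [Complex.sq_norm, Complex.sq_norm]; linarith
    nlinarith [norm_nonneg a, norm_nonneg d]
  set W : ℂ := lam ^ 2 + (a * d - b * c) with hW
  set S : ℝ := ‖W‖ with hSdef
  have hS0 : 0 < S := by
    simpa [hSdef] using (norm_pos_iff.mpr hne)
  have hA0 : 0 < ‖a‖ := norm_pos_iff.mpr ha
  have hD0 : 0 < ‖d‖ := norm_pos_iff.mpr hd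
  have hSsq : S ^ 2 = 4 * ‖a‖ * ‖d‖ := by
    have := congrArg (‖·‖) hmult
    rw [norm_pow, norm_mul, norm_mul, norm_pow, hlam] at this
    rw [show (4:ℝ) * ‖a‖ * ‖d‖ = 4 * (‖a‖ * ‖d‖) by ring]
    simpa [hSdef, norm_mul, Complex.norm_ofNat] using this
  -- Part 1: |Λ|² = |d/a|
  have part1 : ‖W / (2 * a * lam)‖ ^ 2 = ‖d / a‖ := by
    rw [norm_div, norm_div, norm_mul, norm_mul, hlam, Complex.norm_ofNat]
    rw [div_pow, ← hSdef]
    rw [hSsq]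
    field_simp
    ring
  have part2 : ‖W / (2 * a * lam)‖ = 1 := by
    have h1 : ‖W / (2 * a * lam)‖ ^ 2 = 1 := by
      rw [part1, norm_div, ← had, div_self (ne_of_gt hA0)]
    nlinarith [norm_nonneg (W / (2 * a * lam))]
  have part2' : ‖W / (2 * d * lam)‖ = 1 := by
    have h1 : ‖W / (2 * d * lam)‖ ^ 2 = 1 := by
      rw [norm_div, norm_mul, norm_mul, hlam, Complex.norm_ofNat, ← hSdef, div_pow, hSsq,
        ← had]
      field_simp
      ring
    nlinarith [norm_nonneg (W / (2 * d * lam))]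
  refine ⟨part1, part2, fun hAB => ?_⟩
  -- leading coefficients
  set A : ℂ := α * lam ^ 2 - (α * (a * d + b * c) + 2 * b * d * β) with hA
  set A' : ℂ := -(β * lam ^ 2) + (β * (a * d + b * c) + 2 * a * c * α) with hA'
  set B : ℂ := α * lam ^ 2 + α * (a * d - b * c) with hB
  set B' : ℂ := β * lam ^ 2 + β * (a * d - b * c) with hB'
  -- the limit function
  set h : ℝ → ℝ := fun t =>
    ‖A + B * (t : ℂ)‖ ^ 2 / S ^ 2 + ‖A' + B' * (t : ℂ)‖ ^ 2 / S ^ 2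
    with hh
  have hcont : Continuous h := by
    apply Continuous.add <;>
    · apply Continuous.div_const
      apply Continuous.pow
      exact continuous_norm.comp
        (continuous_const.add (continuous_const.mul Complex.continuous_ofReal))
  have hL0 : h 0 = (‖A‖ ^ 2 + ‖A'‖ ^ 2) / S ^ 2 := by
    simp [hh, add_div]
  have hLpos : 0 < h 0 := by
    rw [hL0]
    apply div_pos _ (by positivity)
    rcases not_and_or.mp hAB with h0 | h0
    · have : 0 < ‖A‖ := norm_pos_iff.mpr (by simpa [hA] using h0)
      nlinarith [sq_nonneg (‖A'‖), norm_nonneg A']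
    · have : 0 < ‖A'‖ := norm_pos_iff.mpr (by simpa [hA'] using h0)
      nlinarith [sq_nonneg (‖A‖), norm_nonneg A]
  -- key computation
  have key : ∀ (E : ℂ), ‖E‖ = 1 → ∀ (P Q : ℂ) (x : ℤ), x ≠ 0 →
      ‖E * (1 / W) * (P * (x : ℂ) + Q)‖ ^ 2 / (x : ℝ) ^ 2
        = ‖P + Q * (((x : ℝ))⁻¹ : ℂ)‖ ^ 2 / S ^ 2 := by
    intro E hE P Q x hx
    have hxC : (x : ℂ) ≠ 0 := by exact_mod_cast hx
    have hxR : ((x : ℝ)) ≠ 0 := by exact_mod_cast hx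
    have hfac : P * (x : ℂ) + Q = (P + Q * ((x : ℂ))⁻¹) * (x : ℂ) := by
      field_simp
    rw [hfac, norm_mul, norm_mul, norm_mul, hE, norm_div, norm_one, one_mul, ← hSdef]
    have hcast : ((x : ℂ))⁻¹ = (((x : ℝ))⁻¹ : ℂ) := by push_cast; ring
    rw [hcast]
    have habsx : ‖(x : ℂ)‖ = |(x : ℝ)| := by
      rw [show ((x : ℂ)) = (((x : ℝ) : ℂ)) by push_cast; ring, Complex.norm_real, Real.norm_eq_abs]
    rw [habsx]
    rw [mul_pow, mul_pow, sq_abs]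
    field_simp
  -- eventual equality
  have heq : ∀ x : ℤ, x ≠ 0 → μ x / (x : ℝ) ^ 2 = h ((x : ℝ))⁻¹ := by
    intro x hx
    have hμx := hμ x
    rcases le_or_gt 0 x with hx0 | hx0
    · obtain ⟨hL, hR⟩ := hpos x hx0
      have hLe : ΨL x = (W / (2 * a * lam)) ^ x * (1 / W) * (A * (x : ℂ) + B) := by
        rw [hL, hA, hB]; ring_nf
      have hRe : ΨR x = (W / (2 * a * lam)) ^ x * (1 / W) * (A' * (x : ℂ) + B') := by
        rw [hR, hA', hB']; ring_nf
      have hEabs : ‖(W / (2 * a * lam)) ^ x‖ = 1 := by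
        rw [norm_zpow, part2, _root_.one_zpow]
      rw [hμx, hLe, hRe, add_div, key _ hEabs A B x hx, key _ hEabs A' B' x hx]
      simp only [hh, Complex.ofReal_inv]
    · obtain ⟨hL, hR⟩ := hneg x (le_of_lt hx0)
      have hLe : ΨL x = (W / (2 * d * lam)) ^ (-x) * (1 / W) * (A * (x : ℂ) + B) := by
        rw [hL, hA, hB]; ring_nf
      have hRe : ΨR x = (W / (2 * d * lam)) ^ (-x) * (1 / W) * (A' * (x : ℂ) + B') := by
        rw [hR, hA', hB']; ring_nf
      have hEabs : ‖(W / (2 * d * lam)) ^ (-x)‖ = 1 := by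
        rw [norm_zpow, part2', _root_.one_zpow]
      rw [hμx, hLe, hRe, add_div, key _ hEabs A B x hx, key _ hEabs A' B' x hx]
      simp only [hh, Complex.ofReal_inv]
  -- tendsto at +∞
  have hinv_top : Tendsto (fun x : ℤ => ((x : ℝ))⁻¹) atTop (nhds 0) :=
    tendsto_inv_atTop_zero.comp tendsto_intCast_atTop_atTop
  have hinv_bot : Tendsto (fun x : ℤ => ((x : ℝ))⁻¹) atBot (nhds 0) := by
    have h1 : Tendsto (fun x : ℤ => -((x : ℝ))) atBot atTop := by
      apply tendsto_neg_atBot_atTop.comp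
      exact tendsto_intCast_atBot_iff.2 tendsto_id
    have h2 : Tendsto (fun x : ℤ => (-((x : ℝ)))⁻¹) atBot (nhds 0) :=
      h1.inv_tendsto_atTop
    have h3 := h2.neg
    rw [neg_zero] at h3
    convert h3 using 2 with x
    rw [inv_neg, neg_neg]
  constructor
  · refine ⟨h 0, hLpos, ?_⟩
    apply Tendsto.congr' _ ((hcont.tendsto 0).comp hinv_top)
    filter_upwards [eventually_ge_atTop (1 : ℤ)] with x hx
    exact (heq x (by omega)).symm
  · refine ⟨h 0, hLpos, ?_⟩
    apply Tendsto.congr' _ ((hcont.tendsto 0).comp hinv_bot)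
    filter_upwards [eventually_le_atBot (-1 : ℤ)] with x hx
    exact (heq x (by omega)).symm
end

section
/- Consider the two-defect QW on ℤ with coins U_x = [[cos θ, sin θ],[sin θ, −cos θ]] for x = ±m and U_x = [[1,0],[0,−1]] otherwise, m ≥ 1 and cos θ ≠ 0. For λ on the unit circle and initial values α, β ∈ ℂ, the function Ψ defined piecewise by Ψ(x) = (λ^x α, (−1/λ)^x β) for 0 ≤ x ≤ m−1, Ψ(m) = ((1/cos θ)(λ^m α − sin θ (−1/λ)^m β), (−1/λ)^m β), Ψ(m+1) = ((λ/cos θ)(λ^m α − sin θ(−1/λ)^m β), (1/(λ cos θ))(sin θ λ^m α − (−1/λ)^m β)), Ψ(x) = (λ^{x−(m+1)}Ψ^L(m+1), (−1/λ)^{x−(m+1)}Ψ^R(m+1)) for x ≥ m+2, and symmetrically for x < 0, satisfies the eigenvalue equation λΨ(x) = P_{x+1}Ψ(x+1) + Q_{x-1}Ψ(x-1) for all x ∈ ℤ. -/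
open Complex

/-!
Off the defects the coin is `diag(1, -1)`, so there the eigenvalue equation only says
`ΨL (x + 1) = λ ΨL x` and `ΨR (x - 1) = -λ ΨR x`: each component must be geometric on every
stretch free of defects, and the prescribed pieces are (on the negative half-line they are written
with the reciprocal ratio, and the statement for `ΨR` is the one for `ΨL` after `x ↦ -x`). At each
defect `±m` the equation amounts to two linear relations between the neighbouring values, which
the prescribed formulas satisfy because `sin² θ + cos² θ = 1`.
-/

section Geometric

variable {K : Type*} [Field K]

theorem zpow_neg_eq_zpow_of_mul_eq_one {r s : K} (h : r * s = 1) (n : ℤ) :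
    s ^ (-n) = r ^ n := by
  rw [← inv_zpow', inv_eq_of_mul_eq_one_right (by rwa [mul_comm])]

theorem zpow_mul_eq_mul_zpow_mul {r : K} (hr : r ≠ 0) {n k : ℤ} (h : n = k + 1) (C : K) :
    r ^ n * C = r * (r ^ k * C) := by
  rw [h, zpow_add_one₀ hr]; ring

theorem zpow_mul_eq_mul_zpow_mul_of_mul_eq_one {r s : K} (h : r * s = 1) {n k : ℤ}
    (hk : k = n + 1) (C : K) : s ^ n * C = r * (s ^ k * C) := by
  rw [hk, zpow_add_one₀ (right_ne_zero_of_mul_eq_one h)]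
  linear_combination (-(s ^ n * C)) * h

theorem eq_zpow_mul_of_nonneg_of_nonpos {f : ℤ → K} {r s C : K} {p q : ℤ} (h : r * s = 1)
    (hpos : ∀ x, 0 ≤ x → x ≤ q → f x = r ^ x * C)
    (hneg : ∀ x, p ≤ x → x ≤ 0 → f x = s ^ (-x) * C) {x : ℤ} (hp : p ≤ x) (hq : x ≤ q) :
    f x = r ^ x * C := by
  rcases le_total 0 x with hx | hx
  · exact hpos x hx hq
  · rw [hneg x hp hx, zpow_neg_eq_zpow_of_mul_eq_one h]

theorem eq_mul_apply_sub_one_off_defects {f : ℤ → K} {r s C : K} {m : ℤ} (h : r * s = 1)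
    (hmid : ∀ x, -m ≤ x → x ≤ m - 1 → f x = r ^ x * C)
    (hjump : f (m + 1) = r * f m)
    (hright : ∀ x, m + 2 ≤ x → f x = r ^ (x - (m + 1)) * f (m + 1))
    (hleft : ∀ x, x ≤ -m - 2 → f x = s ^ (-x - (m + 1)) * f (-m - 1))
    {y : ℤ} (hym : y ≠ m) (hym' : y ≠ -m) : f y = r * f (y - 1) := by
  have hr : r ≠ 0 := left_ne_zero_of_mul_eq_one h
  have hright' : ∀ x, m + 1 ≤ x → f x = r ^ (x - (m + 1)) * f (m + 1) := by
    intro x hx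
    rcases hx.eq_or_lt with rfl | hx
    · simp
    · exact hright x (by omega)
  have hleft' : ∀ x, x ≤ -m - 1 → f x = s ^ (-x - (m + 1)) * f (-m - 1) := by
    intro x hx
    rcases hx.eq_or_lt with rfl | hx
    · rw [show -(-m - 1) - (m + 1) = 0 by ring, zpow_zero, one_mul]
    · exact hleft x (by omega)
  obtain hy | hy | rfl | hy :
      y ≤ -m - 1 ∨ (-m + 1 ≤ y ∧ y ≤ m - 1) ∨ y = m + 1 ∨ m + 2 ≤ y := by omega
  · rw [hleft' y hy, hleft' (y - 1) (by omega)]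
    exact zpow_mul_eq_mul_zpow_mul_of_mul_eq_one h (by ring) _
  · rw [hmid y (by omega) hy.2, hmid (y - 1) (by omega) (by omega)]
    exact zpow_mul_eq_mul_zpow_mul hr (by ring) _
  · rwa [add_sub_cancel_right]
  · rw [hright' y (by omega), hright' (y - 1) (by omega)]
    exact zpow_mul_eq_mul_zpow_mul hr (by ring) _

theorem eq_mul_apply_add_one_off_defects {f : ℤ → K} {r s C : K} {m : ℤ} (h : r * s = 1)
    (hmid : ∀ x, -m + 1 ≤ x → x ≤ m → f x = s ^ x * C)
    (hjump : f (-m - 1) = r * f (-m))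
    (hright : ∀ x, m + 2 ≤ x → f x = s ^ (x - (m + 1)) * f (m + 1))
    (hleft : ∀ x, x ≤ -m - 2 → f x = r ^ (-x - (m + 1)) * f (-m - 1))
    {y : ℤ} (hym : y ≠ m) (hym' : y ≠ -m) : f y = r * f (y + 1) := by
  have hreflected := eq_mul_apply_sub_one_off_defects (f := fun x => f (-x)) (C := C) (m := m) h
    (fun x hx hx' => by
      rw [hmid (-x) (by omega) (by omega), zpow_neg_eq_zpow_of_mul_eq_one h])
    (by rw [neg_add', hjump])
    (fun x hx => by rw [neg_add', hleft (-x) (by omega), neg_neg])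
    (fun x hx => by rw [neg_sub', neg_neg, sub_neg_eq_add, hright (-x) (by omega)])
    (y := -y) (by omega) (by omega)
  simpa [add_comm] using hreflected

end Geometric

theorem ofReal_sin_sq_add_cos_sq (θ : ℝ) : (Real.sin θ : ℂ) ^ 2 + (Real.cos θ : ℂ) ^ 2 = 1 := by
  exact_mod_cast Real.sin_sq_add_cos_sq θ

def IsTwoDefectCoin (m : ℤ) (θ : ℝ) (a b c d : ℤ → ℂ) : Prop :=
  ∀ x : ℤ,
    (x = m ∨ x = -m →
      a x = (Real.cos θ : ℂ) ∧ b x = (Real.sin θ : ℂ) ∧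
      c x = (Real.sin θ : ℂ) ∧ d x = -(Real.cos θ : ℂ)) ∧
    (¬(x = m ∨ x = -m) → a x = 1 ∧ b x = 0 ∧ c x = 0 ∧ d x = -1)

section TwoDefectWalk

variable {m : ℤ} {θ : ℝ} {lam α β : ℂ} {a b c d ΨL ΨR : ℤ → ℂ}

theorem scattering_at_pos_defect (hl : lam ≠ 0) (hθ : Real.cos θ ≠ 0)
    (hprev : ΨL (m - 1) = lam ^ (m - 1) * α)
    (hLm : ΨL m = (1 / (Real.cos θ : ℂ)) *
      (lam ^ m * α - (Real.sin θ : ℂ) * (-1 / lam) ^ m * β))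
    (hRm : ΨR m = (-1 / lam) ^ m * β)
    (hRnext : ΨR (m + 1) = (1 / (lam * (Real.cos θ : ℂ))) *
      ((Real.sin θ : ℂ) * lam ^ m * α - (-1 / lam) ^ m * β)) :
    lam * ΨL (m - 1) = Real.cos θ * ΨL m + Real.sin θ * ΨR m ∧
      lam * ΨR (m + 1) = Real.sin θ * ΨL m - Real.cos θ * ΨR m := by
  have hc : (Real.cos θ : ℂ) ≠ 0 := ofReal_ne_zero.mpr hθ
  have hpow : lam ^ m = lam * lam ^ (m - 1) := by rw [← zpow_one_add₀ hl, add_sub_cancel]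
  rw [hprev, hLm, hRm, hRnext, ← mul_assoc, ← hpow]
  generalize (-1 / lam) ^ m = μm
  constructor
  · field_simp
    ring
  · field_simp
    linear_combination μm * β * ofReal_sin_sq_add_cos_sq θ

theorem scattering_at_neg_defect (hl : lam ≠ 0) (hθ : Real.cos θ ≠ 0)
    (hLm : ΨL (-m) = lam ^ (-m) * α)
    (hRm : ΨR (-m) = (1 / (Real.cos θ : ℂ)) *
      ((Real.sin θ : ℂ) * lam ^ (-m) * α + (-lam) ^ m * β))
    (hLprev : ΨL (-m - 1) = (1 / (lam * (Real.cos θ : ℂ))) *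
      (lam ^ (-m) * α + (Real.sin θ : ℂ) * (-lam) ^ m * β))
    (hnext : ΨR (-m + 1) = (-lam) ^ (m - 1) * β) :
    lam * ΨL (-m - 1) = Real.cos θ * ΨL (-m) + Real.sin θ * ΨR (-m) ∧
      lam * ΨR (-m + 1) = Real.sin θ * ΨL (-m) - Real.cos θ * ΨR (-m) := by
  have hc : (Real.cos θ : ℂ) ≠ 0 := ofReal_ne_zero.mpr hθ
  have hpow : (-lam) ^ m = -lam * (-lam) ^ (m - 1) := by
    rw [← zpow_one_add₀ (neg_ne_zero.mpr hl), add_sub_cancel]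
  rw [hLm, hRm, hLprev, hnext]
  constructor
  · field_simp
    linear_combination -(lam ^ (-m) * α) * ofReal_sin_sq_add_cos_sq θ
  · rw [hpow]
    field_simp
    ring

theorem eigen_equation_left (hcoin : IsTwoDefectCoin m θ a b c d)
    (hshift : ∀ y, y ≠ m → y ≠ -m → ΨL y = lam * ΨL (y - 1))
    (hpos : lam * ΨL (m - 1) = Real.cos θ * ΨL m + Real.sin θ * ΨR m)
    (hneg : lam * ΨL (-m - 1) = Real.cos θ * ΨL (-m) + Real.sin θ * ΨR (-m)) (x : ℤ) :
    lam * ΨL x = a (x + 1) * ΨL (x + 1) + b (x + 1) * ΨR (x + 1) := by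
  by_cases hx : x + 1 = m ∨ x + 1 = -m
  · obtain ⟨ha, hb, -, -⟩ := (hcoin (x + 1)).1 hx
    rw [ha, hb]
    rcases hx with hx | hx
    · obtain rfl : x = m - 1 := by omega
      rwa [sub_add_cancel]
    · obtain rfl : x = -m - 1 := by omega
      rwa [sub_add_cancel]
  · obtain ⟨ha, hb, -, -⟩ := (hcoin (x + 1)).2 hx
    rw [ha, hb, hshift (x + 1) (by omega) (by omega), add_sub_cancel_right]
    ring

theorem eigen_equation_right (hcoin : IsTwoDefectCoin m θ a b c d)
    (hshift : ∀ y, y ≠ m → y ≠ -m → ΨR y = -lam * ΨR (y + 1))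
    (hpos : lam * ΨR (m + 1) = Real.sin θ * ΨL m - Real.cos θ * ΨR m)
    (hneg : lam * ΨR (-m + 1) = Real.sin θ * ΨL (-m) - Real.cos θ * ΨR (-m)) (x : ℤ) :
    lam * ΨR x = c (x - 1) * ΨL (x - 1) + d (x - 1) * ΨR (x - 1) := by
  by_cases hx : x - 1 = m ∨ x - 1 = -m
  · obtain ⟨-, -, hc, hd⟩ := (hcoin (x - 1)).1 hx
    rw [hc, hd]
    rcases hx with hx | hx
    · obtain rfl : x = m + 1 := by omega
      rw [add_sub_cancel_right, hpos]
      ring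
    · obtain rfl : x = -m + 1 := by omega
      rw [add_sub_cancel_right, hneg]
      ring
  · obtain ⟨-, -, hc, hd⟩ := (hcoin (x - 1)).2 hx
    rw [hc, hd, hshift (x - 1) (by omega) (by omega), sub_add_cancel]
    ring

end TwoDefectWalk

/-- the piecewise-defined state for the two-defect walk (defects at ±m)
solves the eigenvalue problem. -/
theorem two_defect_eigenvector
    (m : ℤ) (hm : 1 ≤ m) (θ : ℝ) (hθ : Real.cos θ ≠ 0)
    (lam : ℂ) (hlam : ‖lam‖ = 1)
    (a b c d : ℤ → ℂ)
    (hcoin : ∀ x : ℤ,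
      (x = m ∨ x = -m →
        a x = (Real.cos θ : ℂ) ∧ b x = (Real.sin θ : ℂ) ∧
        c x = (Real.sin θ : ℂ) ∧ d x = -(Real.cos θ : ℂ)) ∧
      (¬(x = m ∨ x = -m) → a x = 1 ∧ b x = 0 ∧ c x = 0 ∧ d x = -1))
    (α β : ℂ) (ΨL ΨR : ℤ → ℂ)
    (h0 : ∀ x : ℤ, 0 ≤ x → x ≤ m - 1 → ΨL x = lam ^ x * α ∧ ΨR x = (-1 / lam) ^ x * β)
    (hm1 : ΨL m = (1 / (Real.cos θ : ℂ)) * (lam ^ m * α - (Real.sin θ : ℂ) * (-1 / lam) ^ m * β) ∧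
           ΨR m = (-1 / lam) ^ m * β)
    (hm2 : ΨL (m + 1) = (lam / (Real.cos θ : ℂ)) *
             (lam ^ m * α - (Real.sin θ : ℂ) * (-1 / lam) ^ m * β) ∧
           ΨR (m + 1) = (1 / (lam * (Real.cos θ : ℂ))) *
             ((Real.sin θ : ℂ) * lam ^ m * α - (-1 / lam) ^ m * β))
    (hp : ∀ x : ℤ, m + 2 ≤ x →
      ΨL x = lam ^ (x - (m + 1)) * ΨL (m + 1) ∧
      ΨR x = (-1 / lam) ^ (x - (m + 1)) * ΨR (m + 1))
    (h0' : ∀ x : ℤ, -m + 1 ≤ x → x ≤ 0 →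
      ΨL x = (1 / lam) ^ (-x) * α ∧ ΨR x = (-lam) ^ (-x) * β)
    (hn1 : ΨL (-m) = lam ^ (-m) * α ∧
           ΨR (-m) = (1 / (Real.cos θ : ℂ)) *
             ((Real.sin θ : ℂ) * lam ^ (-m) * α + (-lam) ^ m * β))
    (hn2 : ΨL (-m - 1) = (1 / (lam * (Real.cos θ : ℂ))) *
             (lam ^ (-m) * α + (Real.sin θ : ℂ) * (-lam) ^ m * β) ∧
           ΨR (-m - 1) = -(lam / (Real.cos θ : ℂ)) *
             ((Real.sin θ : ℂ) * lam ^ (-m) * α + (-lam) ^ m * β))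
    (hn : ∀ x : ℤ, x ≤ -m - 2 →
      ΨL x = (1 / lam) ^ (-x - (m + 1)) * ΨL (-m - 1) ∧
      ΨR x = (-lam) ^ (-x - (m + 1)) * ΨR (-m - 1)) :
    ∀ x : ℤ,
      lam * ΨL x = a (x + 1) * ΨL (x + 1) + b (x + 1) * ΨR (x + 1) ∧
      lam * ΨR x = c (x - 1) * ΨL (x - 1) + d (x - 1) * ΨR (x - 1) := by
  have hl : lam ≠ 0 := norm_ne_zero_iff.mp (by rw [hlam]; exact one_ne_zero)
  have hinvL : lam * (1 / lam) = 1 := mul_one_div_cancel hl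
  have hinvR : -lam * (-1 / lam) = 1 := by field_simp
  have hmidL : ∀ x, -m ≤ x → x ≤ m - 1 → ΨL x = lam ^ x * α := by
    intro x hx hx'
    rcases hx.eq_or_lt with rfl | hx
    · exact hn1.1
    · exact eq_zpow_mul_of_nonneg_of_nonpos hinvL (fun y h h' => (h0 y h h').1)
        (fun y h h' => (h0' y h h').1) (by omega) hx'
  have hmidR : ∀ x, -m + 1 ≤ x → x ≤ m → ΨR x = (-1 / lam) ^ x * β := by
    intro x hx hx'
    rcases hx'.eq_or_lt with rfl | hx'
    · exact hm1.2
    · exact eq_zpow_mul_of_nonneg_of_nonpos (mul_comm (-lam) _ ▸ hinvR)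
        (fun y h h' => (h0 y h h').2) (fun y h h' => (h0' y h h').2) hx (by omega)
  have hshiftL := fun y => eq_mul_apply_sub_one_off_defects (y := y) hinvL hmidL
    (by rw [hm2.1, hm1.1]; ring) (fun x hx => (hp x hx).1) (fun x hx => (hn x hx).1)
  have hshiftR := fun y => eq_mul_apply_add_one_off_defects (y := y) hinvR hmidR
    (by rw [hn2.2, hn1.2]; ring) (fun x hx => (hp x hx).2) (fun x hx => (hn x hx).2)
  obtain ⟨hposL, hposR⟩ := scattering_at_pos_defect hl hθ (hmidL (m - 1) (by omega) le_rfl)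
    hm1.1 hm1.2 hm2.2
  obtain ⟨hnegL, hnegR⟩ := scattering_at_neg_defect hl hθ hn1.1 hn1.2 hn2.1
    (by rw [(h0' (-m + 1) le_rfl (by omega)).2, neg_add, neg_neg, ← sub_eq_add_neg])
  exact fun x => ⟨eigen_equation_left hcoin hshiftL hposL hnegL x,
    eigen_equation_right hcoin hshiftR hposR hnegR x⟩
end

section
/- For the space-homogeneous walk with unitary coin U = [[a,b],[c,d]], abcd ≠ 0, and λ with |λ| = 1 and Λ_+ ≠ Λ_- (i.e., (λ²+Δ)² ≠ 4λ²ad), the function Ψ defined for x ≥ 1 by Ψ^L(x) = (1/(Λ_+ − Λ_-))[Λ_+^x(Ψ^L(1) − Λ_-α) − Λ_-^x(Ψ^L(1) − Λ_+α)] and Ψ^R(x) = (1/(Λ_+ − Λ_-))[Λ_+^x(Ψ^R(1) − Λ_-β) − Λ_-^x(Ψ^R(1) − Λ_+β)], where Ψ^L(1) = (αλ² − b(dβ + cα))/(aλ) and Ψ^R(1) = (dβ + cα)/λ, satisfies the one-sided eigenvalue relations λΨ^L(x) = aΨ^L(x+1) + bΨ^R(x+1) for all x ≥ 0 and λΨ^R(x)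 = cΨ^L(x−1) + dΨ^R(x−1) for all x ≥ 2, with Ψ^L(0) = α, Ψ^R(0) = β. -/
/-!
Λ₊ and Λ₋ are the two roots of `aλ Λ² - (λ² + Δ) Λ + dλ`, so by Vieta `aλ (Λ₊ + Λ₋) = λ² + Δ`
and `a Λ₊ Λ₋ = d`. For each root Λ, with Λ' the other one, the geometric sequence
`x ↦ Λ^x (Ψ^L(1) - Λ' α, Ψ^R(1) - Λ' β)` satisfies both eigenvalue relations; the closed form is
a Binet-type combination of these two modes, hence satisfies them too. At `x = 0` the left
relation is just the defining formulas of `Ψ^L(1)` and `Ψ^R(1)`.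
-/

/-- Binet's formula for the sequence with characteristic roots `Λp ≠ Λm` starting `u₀, u₁`. -/
noncomputable def binet (Λp Λm u₀ u₁ : ℂ) (x : ℤ) : ℂ :=
  1 / (Λp - Λm) * (Λp ^ x * (u₁ - Λm * u₀) - Λm ^ x * (u₁ - Λp * u₀))

lemma vieta_of_sq_eq_discrim {A B C s : ℂ} (hA : A ≠ 0) (hs : s ^ 2 = B ^ 2 - 4 * A * C) :
    A * ((B + s) / (2 * A) + (B - s) / (2 * A)) = B ∧
      A * ((B + s) / (2 * A) * ((B - s) / (2 * A))) = C := by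
  constructor
  · field_simp
    ring
  · field_simp
    linear_combination -hs

section Binet

variable {p q r Λp Λm u₀ u₁ v₀ v₁ : ℂ}

lemma binet_relation_succ (hp : Λp ≠ 0) (hm : Λm ≠ 0)
    (hmp : r * (u₁ - Λm * u₀) = Λp * (p * (u₁ - Λm * u₀) + q * (v₁ - Λm * v₀)))
    (hmm : r * (u₁ - Λp * u₀) = Λm * (p * (u₁ - Λp * u₀) + q * (v₁ - Λp * v₀))) (x : ℤ) :
    r * binet Λp Λm u₀ u₁ x =
      p * binet Λp Λm u₀ u₁ (x + 1) + q * binet Λp Λm v₀ v₁ (x + 1) := by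
  simp only [binet, zpow_add_one₀ hp, zpow_add_one₀ hm]
  linear_combination 1 / (Λp - Λm) * Λp ^ x * hmp - 1 / (Λp - Λm) * Λm ^ x * hmm

lemma binet_relation_pred (hp : Λp ≠ 0) (hm : Λm ≠ 0)
    (hmp : r * Λp * (v₁ - Λm * v₀) = p * (u₁ - Λm * u₀) + q * (v₁ - Λm * v₀))
    (hmm : r * Λm * (v₁ - Λp * v₀) = p * (u₁ - Λp * u₀) + q * (v₁ - Λp * v₀)) (x : ℤ) :
    r * binet Λp Λm v₀ v₁ (x + 1) = p * binet Λp Λm u₀ u₁ x + q * binet Λp Λm v₀ v₁ x := by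
  simp only [binet, zpow_add_one₀ hp, zpow_add_one₀ hm]
  linear_combination 1 / (Λp - Λm) * Λp ^ x * hmp - 1 / (Λp - Λm) * Λm ^ x * hmm

end Binet

section Modes

variable {a b c d lam α β u₁ v₁ Λ Λ' : ℂ}

lemma mode_left_relation (hal : a * lam ≠ 0)
    (hsum : a * lam * (Λ + Λ') = lam ^ 2 + (a * d - b * c)) (hprod : a * (Λ * Λ') = d)
    (hu₁ : a * lam * u₁ = α * lam ^ 2 - b * (d * β + c * α)) (hv₁ : lam * v₁ = d * β + c * α) :
    lam * (u₁ - Λ' * α) = Λ * (a * (u₁ - Λ' * α) + b * (v₁ - Λ' * β)) := by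
  apply mul_left_cancel₀ hal
  linear_combination (lam - a * Λ) * hu₁ - a * b * Λ * hv₁ +
    (a * lam * α + b * lam * β) * hprod - lam * α * hsum

lemma mode_right_relation (hal : a * lam ≠ 0)
    (hsum : a * lam * (Λ + Λ') = lam ^ 2 + (a * d - b * c)) (hprod : a * (Λ * Λ') = d)
    (hu₁ : a * lam * u₁ = α * lam ^ 2 - b * (d * β + c * α)) (hv₁ : lam * v₁ = d * β + c * α) :
    lam * Λ * (v₁ - Λ' * β) = c * (u₁ - Λ' * α) + d * (v₁ - Λ' * β) := by
  apply mul_left_cancel₀ hal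
  linear_combination (a * lam * Λ - a * d) * hv₁ - c * hu₁ +
    (d * β + c * α) * hsum - lam ^ 2 * β * hprod

end Modes

theorem distinct_root_one_sided_eigen_general
    (a b c d : ℂ)
    (habcd : a * b * c * d ≠ 0)
    (lam : ℂ) (hlam : ‖lam‖ = 1)
    (sq : ℂ) (hsq : sq ^ 2 = (lam ^ 2 + (a * d - b * c)) ^ 2 - 4 * lam ^ 2 * (a * d))
    (α β : ℂ) (ΨL ΨR : ℤ → ℂ)
    (hL0 : ΨL 0 = α) (hR0 : ΨR 0 = β)
    (hL1 : ΨL 1 = (α * lam ^ 2 - b * (d * β + c * α)) / (a * lam))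
    (hR1 : ΨR 1 = (d * β + c * α) / lam)
    (hLp : ∀ x : ℤ, 1 ≤ x →
      ΨL x = (1 / (((lam ^ 2 + (a * d - b * c)) + sq) / (2 * a * lam)
                  - ((lam ^ 2 + (a * d - b * c)) - sq) / (2 * a * lam))) *
        ((((lam ^ 2 + (a * d - b * c)) + sq) / (2 * a * lam)) ^ x *
            (ΨL 1 - ((lam ^ 2 + (a * d - b * c)) - sq) / (2 * a * lam) * α)
         - (((lam ^ 2 + (a * d - b * c)) - sq) / (2 * a * lam)) ^ x *
            (ΨL 1 - ((lam ^ 2 + (a * d - b * c)) + sq) / (2 * a * lam) * α)))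
    (hRp : ∀ x : ℤ, 1 ≤ x →
      ΨR x = (1 / (((lam ^ 2 + (a * d - b * c)) + sq) / (2 * a * lam)
                  - ((lam ^ 2 + (a * d - b * c)) - sq) / (2 * a * lam))) *
        ((((lam ^ 2 + (a * d - b * c)) + sq) / (2 * a * lam)) ^ x *
            (ΨR 1 - ((lam ^ 2 + (a * d - b * c)) - sq) / (2 * a * lam) * β)
         - (((lam ^ 2 + (a * d - b * c)) - sq) / (2 * a * lam)) ^ x *
            (ΨR 1 - ((lam ^ 2 + (a * d - b * c)) + sq) / (2 * a * lam) * β))) :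
    (∀ x : ℤ, 0 ≤ x → lam * ΨL x = a * ΨL (x + 1) + b * ΨR (x + 1)) ∧
    (∀ x : ℤ, 2 ≤ x → lam * ΨR x = c * ΨL (x - 1) + d * ΨR (x - 1)) ∧
    ΨL 0 = α ∧ ΨR 0 = β := by
  have hd : d ≠ 0 := right_ne_zero_of_mul habcd
  have hl : lam ≠ 0 := norm_ne_zero_iff.mp (by simp [hlam])
  have ha : a ≠ 0 := left_ne_zero_of_mul (left_ne_zero_of_mul (left_ne_zero_of_mul habcd))
  have hal : a * lam ≠ 0 := mul_ne_zero ha hl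
  rw [mul_assoc 2 a lam] at hLp hRp
  obtain ⟨hsum, hprod_lam⟩ := vieta_of_sq_eq_discrim (B := lam ^ 2 + (a * d - b * c))
    (C := d * lam) (s := sq) hal (by linear_combination hsq)
  set Λp := ((lam ^ 2 + (a * d - b * c)) + sq) / (2 * (a * lam))
  set Λm := ((lam ^ 2 + (a * d - b * c)) - sq) / (2 * (a * lam))
  have hprod : a * (Λp * Λm) = d := mul_right_cancel₀ hl (by linear_combination hprod_lam)
  have hp : Λp ≠ 0 := left_ne_zero_of_mul (right_ne_zero_of_mul (hprod ▸ hd))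
  have hm : Λm ≠ 0 := right_ne_zero_of_mul (right_ne_zero_of_mul (hprod ▸ hd))
  have hu₁ : a * lam * ΨL 1 = α * lam ^ 2 - b * (d * β + c * α) := by
    rw [hL1]; field_simp
  have hv₁ : lam * ΨR 1 = d * β + c * α := by
    rw [hR1]; field_simp
  have hsum_swap : a * lam * (Λm + Λp) = lam ^ 2 + (a * d - b * c) := by rwa [add_comm]
  have hprod_swap : a * (Λm * Λp) = d := by rwa [mul_comm Λm]
  refine ⟨fun x hx => ?_, fun x hx => ?_, hL0, hR0⟩
  · rcases hx.eq_or_lt with rfl | hx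
    · rw [zero_add, hL0]
      exact mul_left_cancel₀ hl (by linear_combination -hu₁ - b * hv₁)
    · rw [hLp x (by omega), hLp (x + 1) (by omega), hRp (x + 1) (by omega)]
      exact binet_relation_succ hp hm (mode_left_relation hal hsum hprod hu₁ hv₁)
        (mode_left_relation hal hsum_swap hprod_swap hu₁ hv₁) x
  · obtain ⟨y, rfl⟩ : ∃ y, x = y + 1 := ⟨x - 1, by ring⟩
    rw [add_sub_cancel_right, hRp (y + 1) (by omega), hLp y (by omega), hRp y (by omega)]
    exact binet_relation_pred hp hm (mode_right_relation hal hsum hprod hu₁ hv₁)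
      (mode_right_relation hal hsum_swap hprod_swap hu₁ hv₁) y

/-- the distinct-root closed form on x ≥ 1 satisfies the one-sided
eigenvalue relations for the homogeneous walk. -/
theorem distinct_root_one_sided_eigen
    (a b c d : ℂ)
    (hU : !![a, b; c, d] ∈ Matrix.unitaryGroup (Fin 2) ℂ)
    (habcd : a * b * c * d ≠ 0)
    (lam : ℂ) (hlam : ‖lam‖ = 1)
    (sq : ℂ) (hsq : sq ^ 2 = (lam ^ 2 + (a * d - b * c)) ^ 2 - 4 * lam ^ 2 * (a * d))
    (hdist : (lam ^ 2 + (a * d - b * c)) ^ 2 ≠ 4 * lam ^ 2 * (a * d))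
    (α β : ℂ) (ΨL ΨR : ℤ → ℂ)
    (hL0 : ΨL 0 = α) (hR0 : ΨR 0 = β)
    (hL1 : ΨL 1 = (α * lam ^ 2 - b * (d * β + c * α)) / (a * lam))
    (hR1 : ΨR 1 = (d * β + c * α) / lam)
    (hLp : ∀ x : ℤ, 1 ≤ x →
      ΨL x = (1 / (((lam ^ 2 + (a * d - b * c)) + sq) / (2 * a * lam)
                  - ((lam ^ 2 + (a * d - b * c)) - sq) / (2 * a * lam))) *
        ((((lam ^ 2 + (a * d - b * c)) + sq) / (2 * a * lam)) ^ x *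
            (ΨL 1 - ((lam ^ 2 + (a * d - b * c)) - sq) / (2 * a * lam) * α)
         - (((lam ^ 2 + (a * d - b * c)) - sq) / (2 * a * lam)) ^ x *
            (ΨL 1 - ((lam ^ 2 + (a * d - b * c)) + sq) / (2 * a * lam) * α)))
    (hRp : ∀ x : ℤ, 1 ≤ x →
      ΨR x = (1 / (((lam ^ 2 + (a * d - b * c)) + sq) / (2 * a * lam)
                  - ((lam ^ 2 + (a * d - b * c)) - sq) / (2 * a * lam))) *
        ((((lam ^ 2 + (a * d - b * c)) + sq) / (2 * a * lam)) ^ x *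
            (ΨR 1 - ((lam ^ 2 + (a * d - b * c)) - sq) / (2 * a * lam) * β)
         - (((lam ^ 2 + (a * d - b * c)) - sq) / (2 * a * lam)) ^ x *
            (ΨR 1 - ((lam ^ 2 + (a * d - b * c)) + sq) / (2 * a * lam) * β))) :
    (∀ x : ℤ, 0 ≤ x → lam * ΨL x = a * ΨL (x + 1) + b * ΨR (x + 1)) ∧
    (∀ x : ℤ, 2 ≤ x → lam * ΨR x = c * ΨL (x - 1) + d * ΨR (x - 1)) ∧
    ΨL 0 = α ∧ ΨR 0 = β :=
  distinct_root_one_sided_eigen_general a b c d habcd lam hlam sq hsq α β ΨL ΨR hL0 hR0 hL1 hR1 hLp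
    hRp
end
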